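/- Let a ∈ (0,1) and b > 1 with a·b > 1, and let ω be a bounded increasing function on [0,∞) with ω(0) = 0 and ∫₀¹ ω(s)/s ds < ∞. Then the function t ↦ Σ_{k=0}^∞ a^k ω(min(b^k t, 1)) satisfies ∫₀¹ [Σ_{k=0}^∞ a^k ω(min(b^k s, 1))]/s ds < ∞. -/

import Mathlib

/-! Splitting `(0, 1]` at `c⁻¹` and substituting `u = c s`, which leaves `ds / s` invariant,
gives `∫₀¹ ω (min (c s) 1) / s ds ≤ ∫₀¹ ω u / u du + ω 1 · log c` for `c ≥ 1`. With `c = bᵏ`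
the `k`-th term of the series therefore has integral at most `aᵏ (C + k ω 1 log b)`, which is
summable since `a < 1`, and a series of integrable functions whose norms have summable
integrals is integrable. -/

open MeasureTheory Set Filter
open scoped ENNReal

section Series

variable {α E : Type*} [MeasurableSpace α] {μ : Measure α}
  [NormedAddCommGroup E] [CompleteSpace E]

theorem integrable_tsum_of_summable_integral_norm {ι : Type*} [Countable ι] {F : ι → α → E}
    (hF_int : ∀ i, Integrable (F i) μ) (hF_sum : Summable fun i ↦ ∫ a, ‖F i a‖ ∂μ) :
    Integrable (fun a ↦ ∑' i, F i a) μ := by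
  have hF_enorm : ∀ i, AEMeasurable (fun a ↦ ‖F i a‖ₑ) μ := fun i ↦ (hF_int i).1.enorm
  have hlt : ∫⁻ a, ∑' i, ‖F i a‖ₑ ∂μ < ∞ := by
    rw [lintegral_tsum hF_enorm]
    simp_rw [← ofReal_integral_norm_eq_lintegral_enorm (hF_int _)]
    rw [← ENNReal.ofReal_tsum_of_nonneg (fun i ↦ integral_nonneg fun a ↦ norm_nonneg _) hF_sum]
    exact ENNReal.ofReal_lt_top
  have hsummable : ∀ᵐ a ∂μ, Summable fun i ↦ ‖F i a‖ := by
    filter_upwards [ae_lt_top' (AEMeasurable.tsum hF_enorm) hlt.ne] with a ha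
    exact NNReal.summable_coe.2 (ENNReal.tsum_coe_ne_top_iff_summable.1 ha.ne)
  refine ⟨aestronglyMeasurable_of_tendsto_ae atTop
    (f := fun s a ↦ ∑ i ∈ s, F i a) ?_ ?_, ?_⟩
  · exact fun n ↦ Finset.aestronglyMeasurable_fun_sum _ fun i _ ↦ (hF_int i).1
  · filter_upwards [hsummable] with a ha
    exact ha.of_norm.hasSum
  · exact (lintegral_mono fun a ↦ enorm_tsum_le_tsum_enorm).trans_lt hlt

end Series

section Dilation

variable {g : ℝ → ℝ} {c : ℝ}

theorem comp_mul_div_eq_mul_div_comp_mul (hc : c ≠ 0) :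
    (fun s ↦ g (c * s) / s) = fun s ↦ c * (g (c * s) / (c * s)) := by
  funext s
  rcases eq_or_ne s 0 with rfl | hs
  · simp
  · field_simp

theorem integrableOn_comp_mul_div_Ioc (hc : 0 < c)
    (hg : IntegrableOn (fun u ↦ g u / u) (Ioc 0 1)) :
    IntegrableOn (fun s ↦ g (c * s) / s) (Ioc 0 c⁻¹) := by
  rw [comp_mul_div_eq_mul_div_comp_mul hc.ne',
    ← intervalIntegrable_iff_integrableOn_Ioc_of_le (inv_pos.2 hc).le]
  have hg' := (intervalIntegrable_iff_integrableOn_Ioc_of_le zero_le_one).2 hg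
  simpa using (hg'.comp_mul_left (c := c) enorm_ne_top enorm_ne_top).const_mul c

theorem setIntegral_comp_mul_div_Ioc (hc : 0 < c) :
    ∫ s in Ioc 0 c⁻¹, g (c * s) / s = ∫ u in Ioc 0 1, g u / u := by
  rw [comp_mul_div_eq_mul_div_comp_mul hc.ne', ← intervalIntegral.integral_of_le (inv_pos.2 hc).le,
    ← intervalIntegral.integral_of_le zero_le_one, intervalIntegral.integral_const_mul,
    intervalIntegral.integral_comp_mul_left (fun u ↦ g u / u) hc.ne', mul_zero,
    mul_inv_cancel₀ hc.ne', smul_eq_mul, ← mul_assoc, mul_inv_cancel₀ hc.ne', one_mul]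

end Dilation

section Truncation

variable {ω : ℝ → ℝ} {c : ℝ}

theorem MonotoneOn.comp_min_mul (hω : MonotoneOn ω (Ici 0)) (hc : 0 ≤ c) :
    MonotoneOn (fun s ↦ ω (min (c * s) 1)) (Ici 0) := fun _ hs _ ht hst ↦
  hω (le_min (mul_nonneg hc hs) zero_le_one) (le_min (mul_nonneg hc ht) zero_le_one)
    (min_le_min_right 1 (mul_le_mul_of_nonneg_left hst hc))

theorem eqOn_comp_min_mul_div_Ioc (hc : 0 < c) :
    EqOn (fun s ↦ ω (min (c * s) 1) / s) (fun s ↦ ω (c * s) / s) (Ioc 0 c⁻¹) := fun s hs ↦ by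
  have hcs : c * s ≤ 1 := by
    simpa [mul_inv_cancel₀ hc.ne'] using mul_le_mul_of_nonneg_left hs.2 hc.le
  simp only [min_eq_left hcs]

theorem integrableOn_const_div_Ioc (C : ℝ) {e d : ℝ} (he : 0 < e) :
    IntegrableOn (fun s ↦ C / s) (Ioc e d) :=
  (continuousOn_const.div continuousOn_id fun _ hs ↦ (he.trans_le hs.1).ne').integrableOn_Icc
    |>.mono_set Ioc_subset_Icc_self

theorem comp_min_mul_div_le (hω : MonotoneOn ω (Ici 0)) (hc : 0 ≤ c) {s : ℝ} (hs : 0 < s) :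
    ω (min (c * s) 1) / s ≤ ω 1 / s :=
  div_le_div_of_nonneg_right (hω (le_min (mul_nonneg hc hs.le) zero_le_one) (zero_le_one' ℝ)
    (min_le_right _ _)) hs.le

theorem comp_min_mul_div_nonneg (hω₀ : ∀ t, 0 ≤ t → 0 ≤ ω t) (hc : 0 ≤ c) {s : ℝ} (hs : 0 ≤ s) :
    0 ≤ ω (min (c * s) 1) / s :=
  div_nonneg (hω₀ _ (le_min (mul_nonneg hc hs) zero_le_one)) hs

theorem integrableOn_comp_min_mul_div_Ioc_inv (hω : MonotoneOn ω (Ici 0))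
    (hω₀ : ∀ t, 0 ≤ t → 0 ≤ ω t) (hc : 0 < c) :
    IntegrableOn (fun s ↦ ω (min (c * s) 1) / s) (Ioc c⁻¹ 1) := by
  have hpos : ∀ s ∈ Ioc c⁻¹ 1, 0 < s := fun s hs ↦ (inv_pos.2 hc).trans hs.1
  refine (integrableOn_const_div_Ioc (ω 1) (inv_pos.2 hc)).mono' ?_ ?_
  · exact (aemeasurable_restrict_of_monotoneOn measurableSet_Ioc
      ((hω.comp_min_mul hc.le).mono fun s hs ↦ (hpos s hs).le)).div aemeasurable_id
      |>.aestronglyMeasurable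
  · filter_upwards [ae_restrict_mem measurableSet_Ioc] with s hs
    rw [Real.norm_of_nonneg (comp_min_mul_div_nonneg hω₀ hc.le (hpos s hs).le)]
    exact comp_min_mul_div_le hω hc.le (hpos s hs)

theorem setIntegral_comp_min_mul_div_Ioc_inv_le (hω : MonotoneOn ω (Ici 0))
    (hω₀ : ∀ t, 0 ≤ t → 0 ≤ ω t) (hc : 1 ≤ c) :
    ∫ s in Ioc c⁻¹ 1, ω (min (c * s) 1) / s ≤ ω 1 * Real.log c := by
  have hc₀ : 0 < c := one_pos.trans_le hc
  calc ∫ s in Ioc c⁻¹ 1, ω (min (c * s) 1) / s ≤ ∫ s in Ioc c⁻¹ 1, ω 1 / s :=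
        setIntegral_mono_on (integrableOn_comp_min_mul_div_Ioc_inv hω hω₀ hc₀)
          (integrableOn_const_div_Ioc (ω 1) (inv_pos.2 hc₀)) measurableSet_Ioc
          fun s hs ↦ comp_min_mul_div_le hω hc₀.le ((inv_pos.2 hc₀).trans hs.1)
    _ = ω 1 * Real.log c := by
      simp_rw [div_eq_mul_inv (ω 1)]
      rw [← intervalIntegral.integral_of_le (inv_le_one_of_one_le₀ hc),
        intervalIntegral.integral_const_mul, integral_inv_of_pos (inv_pos.2 hc₀) one_pos,
        one_div, inv_inv]

theorem integrableOn_comp_min_mul_div_Ioc (hc : 0 < c)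
    (hint : IntegrableOn (fun s ↦ ω s / s) (Ioc 0 1)) :
    IntegrableOn (fun s ↦ ω (min (c * s) 1) / s) (Ioc 0 c⁻¹) :=
  (integrableOn_comp_mul_div_Ioc hc hint).congr_fun (eqOn_comp_min_mul_div_Ioc hc).symm
    measurableSet_Ioc

theorem integrableOn_comp_min_mul_div (hω : MonotoneOn ω (Ici 0))
    (hω₀ : ∀ t, 0 ≤ t → 0 ≤ ω t) (hc : 1 ≤ c) (hint : IntegrableOn (fun s ↦ ω s / s) (Ioc 0 1)) :
    IntegrableOn (fun s ↦ ω (min (c * s) 1) / s) (Ioc 0 1) := by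
  have hc₀ : 0 < c := one_pos.trans_le hc
  rw [← Ioc_union_Ioc_eq_Ioc (inv_pos.2 hc₀).le (inv_le_one_of_one_le₀ hc)]
  exact (integrableOn_comp_min_mul_div_Ioc hc₀ hint).union
    (integrableOn_comp_min_mul_div_Ioc_inv hω hω₀ hc₀)

theorem setIntegral_comp_min_mul_div_le (hω : MonotoneOn ω (Ici 0))
    (hω₀ : ∀ t, 0 ≤ t → 0 ≤ ω t) (hc : 1 ≤ c) (hint : IntegrableOn (fun s ↦ ω s / s) (Ioc 0 1)) :
    ∫ s in Ioc 0 1, ω (min (c * s) 1) / s ≤ (∫ s in Ioc 0 1, ω s / s) + ω 1 * Real.log c := by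
  have hc₀ : 0 < c := one_pos.trans_le hc
  calc ∫ s in Ioc 0 1, ω (min (c * s) 1) / s
      = (∫ s in Ioc 0 c⁻¹, ω (min (c * s) 1) / s) + ∫ s in Ioc c⁻¹ 1, ω (min (c * s) 1) / s := by
        rw [← setIntegral_union (Ioc_disjoint_Ioc_of_le le_rfl) measurableSet_Ioc
          (integrableOn_comp_min_mul_div_Ioc hc₀ hint)
          (integrableOn_comp_min_mul_div_Ioc_inv hω hω₀ hc₀),
          Ioc_union_Ioc_eq_Ioc (inv_pos.2 hc₀).le (inv_le_one_of_one_le₀ hc)]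
    _ = (∫ s in Ioc 0 1, ω s / s) + ∫ s in Ioc c⁻¹ 1, ω (min (c * s) 1) / s := by
        rw [setIntegral_congr_fun measurableSet_Ioc (eqOn_comp_min_mul_div_Ioc hc₀),
          setIntegral_comp_mul_div_Ioc hc₀]
    _ ≤ (∫ s in Ioc 0 1, ω s / s) + ω 1 * Real.log c := by
        grw [setIntegral_comp_min_mul_div_Ioc_inv_le hω hω₀ hc]

end Truncation

theorem summable_pow_mul_add_mul {𝕜 : Type*} [NormedField 𝕜] [CompleteSpace 𝕜] {a : 𝕜}
    (ha : ‖a‖ < 1) (C L : 𝕜) :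
    Summable fun k : ℕ ↦ a ^ k * (C + k * L) :=
  ((summable_geometric_of_norm_lt_one ha).mul_left C).add
    ((summable_pow_mul_geometric_of_norm_lt_one 1 ha).mul_left L) |>.congr fun k ↦ by ring

theorem stmt9_general (a b : ℝ) (ha : a ∈ Ioo (0:ℝ) 1) (hb : 1 < b)
    (ω : ℝ → ℝ) (hmono : MonotoneOn ω (Ici 0)) (hnonneg : ∀ t, 0 ≤ t → 0 ≤ ω t)
    (hint : IntegrableOn (fun s => ω s / s) (Ioc 0 1)) :
    IntegrableOn
      (fun s => (∑' k : ℕ, a ^ k * ω (min (b ^ k * s) 1)) / s) (Ioc 0 1) := by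
  obtain ⟨ha₀, ha₁⟩ := ha
  set f : ℕ → ℝ → ℝ := fun k s ↦ a ^ k * (ω (min (b ^ k * s) 1) / s) with hf
  have hf_int (k : ℕ) : IntegrableOn (f k) (Ioc 0 1) :=
    (integrableOn_comp_min_mul_div hmono hnonneg (one_le_pow₀ hb.le) hint).const_mul _
  have hf_nonneg (k : ℕ) {s : ℝ} (hs : s ∈ Ioc 0 1) : 0 ≤ f k s :=
    mul_nonneg (pow_nonneg ha₀.le k)
      (comp_min_mul_div_nonneg hnonneg (pow_nonneg (zero_le_one.trans hb.le) k) hs.1.le)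
  have hf_norm (k : ℕ) : ∫ s in Ioc 0 1, ‖f k s‖ ≤
      a ^ k * ((∫ s in Ioc 0 1, ω s / s) + k * (ω 1 * Real.log b)) := by
    rw [setIntegral_congr_fun measurableSet_Ioc fun s hs ↦ Real.norm_of_nonneg (hf_nonneg k hs),
      integral_const_mul, mul_left_comm, ← Real.log_pow]
    gcongr
    exact setIntegral_comp_min_mul_div_le hmono hnonneg (one_le_pow₀ hb.le) hint
  have hsum := (summable_pow_mul_add_mul (by rwa [Real.norm_of_nonneg ha₀.le]) _ _).of_nonneg_of_le
    (fun k ↦ integral_nonneg fun s ↦ norm_nonneg (f k s)) hf_norm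
  have hF : IntegrableOn (fun s ↦ ∑' k, f k s) (Ioc 0 1) :=
    integrable_tsum_of_summable_integral_norm hf_int hsum
  refine hF.congr_fun (fun s _ ↦ ?_) measurableSet_Ioc
  simp only [hf, mul_div_assoc', tsum_div_const]

theorem stmt9 (a b : ℝ) (ha : a ∈ Ioo (0:ℝ) 1) (hb : 1 < b) (hab : 1 < a * b)
    (ω : ℝ → ℝ) (hmono : MonotoneOn ω (Ici 0)) (hnonneg : ∀ t, 0 ≤ t → 0 ≤ ω t)
    (hbdd : ∃ M, ∀ t, 0 ≤ t → ω t ≤ M) (h0 : ω 0 = 0)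
    (hint : IntegrableOn (fun s => ω s / s) (Ioc 0 1)) :
    IntegrableOn
      (fun s => (∑' k : ℕ, a ^ k * ω (min (b ^ k * s) 1)) / s) (Ioc 0 1) :=
  stmt9_general a b ha hb ω hmono hnonneg hint
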